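/- Let Ω ⊆ ℂⁿ be open, let A, E ⊂⊂ Ω be non-pluripolar, and suppose the relative extremal function u_{E,Ω} is continuous on Ω. Then for every z ∈ Ω, h_E(z) = (u_{E,Ω}(z) + 1) / |sup_A u_{E,Ω}|. -/

import Mathlib

open MeasureTheory Metric Set

/-- Plurisubharmonicity for `EReal`-valued functions on an open set `Ω` of a complex
normed space: upper semicontinuity together with the sub-mean value inequality on every
complex disc contained in `Ω`, the circle average being expressed via continuous majorants. -/
def IsPSHOnE {V : Type*} [NormedAddCommGroup V] [NormedSpace ℂ V]
    (u : V → EReal) (Ω : Set V) : Prop :=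
  UpperSemicontinuousOn u Ω ∧
  ∀ a ∈ Ω, ∀ b : V, ∀ r : ℝ, 0 < r →
    (∀ w : ℂ, ‖w‖ ≤ r → a + w • b ∈ Ω) →
    ∀ g : ℝ → ℝ, Continuous g →
      (∀ θ : ℝ, u (a + (circleMap 0 r θ) • b) ≤ ((g θ : ℝ) : EReal)) →
      u a ≤ (((2 * Real.pi)⁻¹ * ∫ θ in (0:ℝ)..(2 * Real.pi), g θ : ℝ) : EReal)

/-- Plurisubharmonicity for real-valued functions. -/
def IsPSHOn {V : Type*} [NormedAddCommGroup V] [NormedSpace ℂ V]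
    (f : V → ℝ) (Ω : Set V) : Prop :=
  IsPSHOnE (fun z => ((f z : ℝ) : EReal)) Ω

/-- A set is pluripolar if it is contained in the `-∞` set of a plurisubharmonic
function on the whole space which is not identically `-∞`. -/
def IsPluripolar {V : Type*} [NormedAddCommGroup V] [NormedSpace ℂ V] (E : Set V) : Prop :=
  ∃ u : V → EReal, IsPSHOnE u Set.univ ∧ (¬ ∀ z, u z = ⊥) ∧ ∀ z ∈ E, u z = ⊥

/-- The Lelong class: entire plurisubharmonic functions of at most logarithmic growth. -/
def InLelongClass {V : Type*} [NormedAddCommGroup V] [NormedSpace ℂ V] (f : V → ℝ) : Prop :=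
  IsPSHOn f Set.univ ∧ ∃ C : ℝ, ∀ z, f z ≤ Real.log (max ‖z‖ 1) + C

/-- The Siciak extremal function of a set `E`. -/
noncomputable def siciak {V : Type*} [NormedAddCommGroup V] [NormedSpace ℂ V]
    (E : Set V) (z : V) : ℝ :=
  sSup {y | ∃ f : V → ℝ, InLelongClass f ∧ (∀ x ∈ E, f x ≤ 0) ∧ y = f z}

/-- The relative extremal function of `E` in `Ω`. -/
noncomputable def relExtremal {V : Type*} [NormedAddCommGroup V] [NormedSpace ℂ V]
    (E Ω : Set V) (z : V) : ℝ :=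
  sSup {y | ∃ f : V → ℝ, IsPSHOn f Ω ∧ (∀ x ∈ Ω, f x ≤ 0) ∧ (∀ x ∈ E, f x ≤ -1) ∧ y = f z}

/-- The function `h_E` measuring local growth of plurisubharmonic functions. -/
noncomputable def hFun {V : Type*} [NormedAddCommGroup V] [NormedSpace ℂ V]
    (A E Ω : Set V) (z : V) : ℝ :=
  sSup {y | ∃ f : V → ℝ, IsPSHOn f Ω ∧ (∀ x ∈ Ω, f x ≤ 0) ∧ -1 ≤ sSup (f '' A) ∧
    y = f z - sSup (f '' E)}

/-- The inclusion of `ℝⁿ` into `ℂⁿ`. -/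
noncomputable def embedR {n : ℕ} (x : EuclideanSpace ℝ (Fin n)) : EuclideanSpace ℂ (Fin n) :=
  WithLp.toLp 2 (fun i => ((x i : ℝ) : ℂ))

/-- `γ` is the Siciak (logarithmic) capacity of `E`:
`limsup_{s→∞} ( sup_{B_c(0,s)} V_E − log s ) = −log γ`. -/
def HasSiciakCapacity {V : Type*} [NormedAddCommGroup V] [NormedSpace ℂ V]
    (E : Set V) (γ : ℝ) : Prop :=
  Filter.limsup (fun s : ℝ => sSup (siciak E '' Metric.closedBall (0 : V) s) - Real.log s)
    Filter.atTop = -Real.log γ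

/-!
Write `u = u_{E,Ω}`. It is plurisubharmonic, `-1 ≤ u ≤ 0` on `Ω` and `u = -1` on `E`, so every
`c u` with `0 < c ≤ 1 / |sup_A u|` competes in the definition of `h_E` and yields the value
`c (u(z) + 1)`. Conversely, if `f` competes and `m = -sup_E f > 0`, then `f / m` competes for `u`,
so `f ≤ m u`; hence `-1 ≤ sup_A f ≤ m sup_A u`, i.e. `m ≤ 1 / |sup_A u|`, and
`f(z) - sup_E f ≤ m (u(z) + 1)`.
-/

section PSH

variable {V : Type*} [NormedAddCommGroup V] [NormedSpace ℂ V] {Ω : Set V}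

lemma IsPSHOn.of_real {f : V → ℝ} (husc : UpperSemicontinuousOn f Ω)
    (hmean : ∀ a ∈ Ω, ∀ b : V, ∀ r : ℝ, 0 < r → (∀ w : ℂ, ‖w‖ ≤ r → a + w • b ∈ Ω) →
      ∀ g : ℝ → ℝ, Continuous g → (∀ θ : ℝ, f (a + circleMap 0 r θ • b) ≤ g θ) →
        f a ≤ (2 * Real.pi)⁻¹ * ∫ θ in (0:ℝ)..(2 * Real.pi), g θ) :
    IsPSHOn f Ω :=
  ⟨continuous_coe_real_ereal.comp_upperSemicontinuousOn husc EReal.coe_strictMono.monotone,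
    fun a ha b r hr hball g hg hle =>
      EReal.coe_le_coe_iff.mpr <| hmean a ha b r hr hball g hg fun θ =>
        EReal.coe_le_coe_iff.mp (hle θ)⟩

lemma IsPSHOn.le_average {f : V → ℝ} (hf : IsPSHOn f Ω) {a : V} (ha : a ∈ Ω) (b : V)
    {r : ℝ} (hr : 0 < r) (hball : ∀ w : ℂ, ‖w‖ ≤ r → a + w • b ∈ Ω) {g : ℝ → ℝ}
    (hg : Continuous g) (hle : ∀ θ : ℝ, f (a + circleMap 0 r θ • b) ≤ g θ) :
    f a ≤ (2 * Real.pi)⁻¹ * ∫ θ in (0:ℝ)..(2 * Real.pi), g θ :=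
  EReal.coe_le_coe_iff.mp <|
    hf.2 a ha b r hr hball g hg fun θ => EReal.coe_le_coe_iff.mpr (hle θ)

lemma isPSHOn_const (k : ℝ) : IsPSHOn (fun _ => k) Ω := by
  refine .of_real continuousOn_const.upperSemicontinuousOn fun _ _ _ _ _ _ g hg hle => ?_
  have hπ : (0:ℝ) < 2 * Real.pi := by positivity
  have hint : ∫ _ in (0:ℝ)..(2 * Real.pi), k ≤ ∫ θ in (0:ℝ)..(2 * Real.pi), g θ :=
    intervalIntegral.integral_mono_on hπ.le intervalIntegrable_const (hg.intervalIntegrable _ _)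
      fun θ _ => hle θ
  rw [intervalIntegral.integral_const, smul_eq_mul, sub_zero] at hint
  rw [inv_mul_eq_div, le_div_iff₀ hπ, mul_comm]
  exact hint

lemma IsPSHOn.const_mul {f : V → ℝ} {c : ℝ} (hc : 0 < c) (hf : IsPSHOn f Ω) :
    IsPSHOn (fun z => c * f z) Ω := by
  have husc : UpperSemicontinuousOn f Ω :=
    fun x hx y hy => by simpa using hf.1 x hx y (EReal.coe_lt_coe_iff.mpr hy)
  refine .of_real ((continuous_const_mul c).comp_upperSemicontinuousOn husc
    (monotone_mul_left_of_nonneg hc.le)) fun a ha b r hr hball g hg hle => ?_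
  have hdiv : f a ≤ (2 * Real.pi)⁻¹ * ∫ θ in (0:ℝ)..(2 * Real.pi), c⁻¹ * g θ :=
    hf.le_average ha b hr hball (by fun_prop) fun θ => by
      rw [le_inv_mul_iff₀ hc]; exact hle θ
  rw [intervalIntegral.integral_const_mul, mul_left_comm] at hdiv
  exact (le_inv_mul_iff₀ hc).mp hdiv

lemma isPluripolar_empty : IsPluripolar (∅ : Set V) :=
  ⟨_, isPSHOn_const (Ω := univ) 0, fun h => EReal.coe_ne_bot 0 (h 0), fun _ h => h.elim⟩

lemma Set.Nonempty.of_not_isPluripolar {S : Set V} (h : ¬ IsPluripolar S) : S.Nonempty :=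
  nonempty_iff_ne_empty.mpr fun hS => h (hS ▸ isPluripolar_empty)

end PSH

section RelExtremal

variable {V : Type*} [NormedAddCommGroup V] [NormedSpace ℂ V] {E Ω : Set V} {z : V}

lemma le_relExtremal {f : V → ℝ} (hf : IsPSHOn f Ω) (hf0 : ∀ x ∈ Ω, f x ≤ 0)
    (hfE : ∀ x ∈ E, f x ≤ -1) (hz : z ∈ Ω) : f z ≤ relExtremal E Ω z :=
  le_csSup ⟨0, by rintro _ ⟨g, -, hg0, -, rfl⟩; exact hg0 z hz⟩ ⟨f, hf, hf0, hfE, rfl⟩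

lemma relExtremal_le {c : ℝ}
    (h : ∀ f : V → ℝ, IsPSHOn f Ω → (∀ x ∈ Ω, f x ≤ 0) → (∀ x ∈ E, f x ≤ -1) → f z ≤ c) :
    relExtremal E Ω z ≤ c :=
  csSup_le ⟨-1, _, isPSHOn_const (-1), fun _ _ => by norm_num, fun _ _ => le_rfl, rfl⟩ <| by
    rintro _ ⟨f, hf, hf0, hfE, rfl⟩
    exact h f hf hf0 hfE

lemma relExtremal_nonpos (hz : z ∈ Ω) : relExtremal E Ω z ≤ 0 :=
  relExtremal_le fun _ _ hf0 _ => hf0 z hz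

lemma neg_one_le_relExtremal (hz : z ∈ Ω) : -1 ≤ relExtremal E Ω z :=
  le_relExtremal (isPSHOn_const (-1)) (fun _ _ => by norm_num) (fun _ _ => le_rfl) hz

lemma relExtremal_eq_neg_one (hEΩ : E ⊆ Ω) (hz : z ∈ E) : relExtremal E Ω z = -1 :=
  le_antisymm (relExtremal_le fun _ _ _ hfE => hfE z hz) (neg_one_le_relExtremal (hEΩ hz))

/-- Each competitor satisfies the sub-mean value inequality, hence so does their supremum;
upper semicontinuity is the one property a supremum can lose, and continuity restores it. -/
lemma isPSHOn_relExtremal (hcont : ContinuousOn (relExtremal E Ω) Ω) :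
    IsPSHOn (relExtremal E Ω) Ω := by
  refine .of_real hcont.upperSemicontinuousOn fun a ha b r hr hball g hg hle => ?_
  refine relExtremal_le fun f hf hf0 hfE => hf.le_average ha b hr hball hg fun θ => ?_
  have hmem : a + circleMap 0 r θ • b ∈ Ω :=
    hball _ (by rw [norm_circleMap_zero, abs_of_pos hr])
  exact (le_relExtremal hf hf0 hfE hmem).trans (hle θ)

lemma le_neg_sSup_image_mul_relExtremal (hEΩ : E ⊆ Ω) {f : V → ℝ} (hf : IsPSHOn f Ω)
    (hf0 : ∀ x ∈ Ω, f x ≤ 0) (hz : z ∈ Ω) :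
    f z ≤ -sSup (f '' E) * relExtremal E Ω z := by
  set m := -sSup (f '' E)
  have hf0E : ∀ y ∈ f '' E, y ≤ 0 := forall_mem_image.mpr fun x hx => hf0 x (hEΩ hx)
  have hm : 0 ≤ m := neg_nonneg.mpr (Real.sSup_nonpos hf0E)
  rcases hm.eq_or_lt with hm | hm
  · simpa [← hm] using hf0 z hz
  have hscaled : m⁻¹ * f z ≤ relExtremal E Ω z := by
    refine le_relExtremal (hf.const_mul (inv_pos.mpr hm))
      (fun x hx => mul_nonpos_of_nonneg_of_nonpos (inv_nonneg.mpr hm.le) (hf0 x hx))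
      (fun x hx => ?_) hz
    rw [inv_mul_le_iff₀ hm, mul_neg_one, neg_neg]
    exact le_csSup ⟨0, hf0E⟩ (mem_image_of_mem f hx)
  rwa [inv_mul_le_iff₀ hm] at hscaled

end RelExtremal

/-- For `s = 0` both sides are junk `0`: `a / 0 = 0`, and `S` either has maximum `0` (if `a = 0`)
or is unbounded above. -/
lemma Real.sSup_eq_div_abs_of_forall_le_mul {S : Set ℝ} {a s : ℝ} (ha : 0 ≤ a) (hs : s ≤ 0)
    (hle : ∀ y ∈ S, ∃ m, 0 ≤ m ∧ -1 ≤ m * s ∧ y ≤ m * a)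
    (hmem : ∀ c, 0 < c → -1 ≤ c * s → c * a ∈ S) :
    sSup S = a / |s| := by
  rcases hs.lt_or_eq with hs | rfl
  · rw [abs_of_neg hs, div_eq_inv_mul]
    have hs' : 0 < -s := neg_pos.mpr hs
    have hmax : (-s)⁻¹ * a ∈ S :=
      hmem _ (inv_pos.mpr hs') (by rw [inv_mul_eq_div, div_neg, div_self hs.ne])
    refine IsGreatest.csSup_eq ⟨hmax, fun y hy => ?_⟩
    obtain ⟨m, hm0, hms, hy⟩ := hle y hy
    have hm : m ≤ (-s)⁻¹ := by rw [← one_div, le_div_iff₀ hs']; linarith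
    exact hy.trans (mul_le_mul_of_nonneg_right hm ha)
  rw [abs_zero, div_zero]
  rcases ha.eq_or_lt with rfl | ha
  · refine IsGreatest.csSup_eq ⟨by simpa using hmem 1 one_pos (by simp), fun y hy => ?_⟩
    obtain ⟨m, -, -, hy⟩ := hle y hy
    simpa using hy
  refine Real.sSup_of_not_bddAbove fun ⟨b, hb⟩ => ?_
  have hbig := hb (hmem ((|b| + 1) / a) (by positivity) (by simp))
  rw [div_mul_cancel₀ _ ha.ne'] at hbig
  linarith [le_abs_self b]

lemma Real.sSup_image_const_mul {α : Type*} {c : ℝ} (hc : 0 ≤ c) (f : α → ℝ) (A : Set α) :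
    sSup ((fun x => c * f x) '' A) = c * sSup (f '' A) := by
  rw [← smul_eq_mul, ← Real.sSup_smul_of_nonneg hc, ← Set.image_smul, Set.image_image]
  rfl

section HFun

variable {V : Type*} [NormedAddCommGroup V] [NormedSpace ℂ V] {A E Ω : Set V} {z : V}

def hFunCandidates (A E Ω : Set V) (z : V) : Set ℝ :=
  {y | ∃ f : V → ℝ, IsPSHOn f Ω ∧ (∀ x ∈ Ω, f x ≤ 0) ∧ -1 ≤ sSup (f '' A) ∧
    y = f z - sSup (f '' E)}

lemma hFun_eq_sSup_hFunCandidates : hFun A E Ω z = sSup (hFunCandidates A E Ω z) := rfl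

lemma exists_le_mul_of_mem_hFunCandidates (hA : A.Nonempty) (hAΩ : A ⊆ Ω) (hEΩ : E ⊆ Ω)
    (hz : z ∈ Ω) {y : ℝ} (hy : y ∈ hFunCandidates A E Ω z) :
    ∃ m, 0 ≤ m ∧ -1 ≤ m * sSup (relExtremal E Ω '' A) ∧ y ≤ m * (relExtremal E Ω z + 1) := by
  obtain ⟨f, hf, hf0, hfA, rfl⟩ := hy
  have hfu x (hx : x ∈ Ω) := le_neg_sSup_image_mul_relExtremal hEΩ hf hf0 hx
  have hm : 0 ≤ -sSup (f '' E) :=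
    neg_nonneg.mpr <| Real.sSup_nonpos (forall_mem_image.mpr fun x hx => hf0 x (hEΩ hx))
  have hbdd : BddAbove (relExtremal E Ω '' A) :=
    ⟨0, forall_mem_image.mpr fun x hx => relExtremal_nonpos (hAΩ hx)⟩
  refine ⟨_, hm, hfA.trans <| csSup_le (hA.image f) <| forall_mem_image.mpr fun x hx => ?_, ?_⟩
  · exact (hfu x (hAΩ hx)).trans <|
      mul_le_mul_of_nonneg_left (le_csSup hbdd (mem_image_of_mem _ hx)) hm
  · linarith [hfu z hz]

lemma mul_mem_hFunCandidates (hE : E.Nonempty) (hEΩ : E ⊆ Ω)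
    (hu : IsPSHOn (relExtremal E Ω) Ω) {c : ℝ} (hc : 0 < c)
    (hcA : -1 ≤ c * sSup (relExtremal E Ω '' A)) :
    c * (relExtremal E Ω z + 1) ∈ hFunCandidates A E Ω z := by
  have hE_image : (fun x => c * relExtremal E Ω x) '' E = {-c} := by
    rw [← hE.image_const]
    exact image_congr fun x hx => by rw [relExtremal_eq_neg_one hEΩ hx, mul_neg_one]
  refine ⟨fun x => c * relExtremal E Ω x, hu.const_mul hc,
    fun x hx => mul_nonpos_of_nonneg_of_nonpos hc.le (relExtremal_nonpos hx), ?_, ?_⟩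
  · rwa [Real.sSup_image_const_mul hc.le]
  · rw [hE_image, csSup_singleton]
    ring

end HFun

theorem hFun_eq_of_continuous_general {n : ℕ} (Ω A E : Set (EuclideanSpace ℂ (Fin n)))
    (hAΩ : closure A ⊆ Ω)
    (hEΩ : closure E ⊆ Ω)
    (hAnp : ¬ IsPluripolar A) (hEnp : ¬ IsPluripolar E)
    (hcont : ContinuousOn (relExtremal E Ω) Ω) :
    ∀ z ∈ Ω, hFun A E Ω z = (relExtremal E Ω z + 1) / |sSup (relExtremal E Ω '' A)| := by
  intro z hz
  have hA := Set.Nonempty.of_not_isPluripolar hAnp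
  have hE := Set.Nonempty.of_not_isPluripolar hEnp
  have hAΩ' := subset_closure.trans hAΩ
  have hEΩ' := subset_closure.trans hEΩ
  rw [hFun_eq_sSup_hFunCandidates]
  refine Real.sSup_eq_div_abs_of_forall_le_mul (by linarith [neg_one_le_relExtremal (E := E) hz])
    (Real.sSup_nonpos (forall_mem_image.mpr fun x hx => relExtremal_nonpos (hAΩ' hx)))
    (fun y hy => exists_le_mul_of_mem_hFunCandidates hA hAΩ' hEΩ' hz hy)
    (fun c hc hcA => mul_mem_hFunCandidates hE hEΩ' (isPSHOn_relExtremal hcont) hc hcA)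

/-- when `u_{E,Ω}` is continuous, `h_E` equals `(u_{E,Ω} + 1)/|sup_A u_{E,Ω}|`. -/
theorem hFun_eq_of_continuous {n : ℕ} (Ω A E : Set (EuclideanSpace ℂ (Fin n)))
    (hΩ : IsOpen Ω)
    (hAc : IsCompact (closure A)) (hAΩ : closure A ⊆ Ω)
    (hEc : IsCompact (closure E)) (hEΩ : closure E ⊆ Ω)
    (hAnp : ¬ IsPluripolar A) (hEnp : ¬ IsPluripolar E)
    (hcont : ContinuousOn (relExtremal E Ω) Ω) :
    ∀ z ∈ Ω, hFun A E Ω z = (relExtremal E Ω z + 1) / |sSup (relExtremal E Ω '' A)| :=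
  hFun_eq_of_continuous_general Ω A E hAΩ hEΩ hAnp hEnp hcont
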